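/- arXiv:2008.13092 — 3 statements merged into one kernel-verified Lean document; each statement's English description precedes it below -/
import Mathlib

section
/- For every ν < 1, z, w > 0 and t, s > 0, the kernel q satisfies the Chapman–Kolmogorov equation q(z,w,t+s) = ∫_0^∞ q(z,ξ,t) q(ξ,w,s) dξ. -/
/-!
Write `α = 2 - ν` and `S_α(x) = ∑ xⁿ / (n! Γ(α + n))`, so that
`q(z,w,t) = z^(α-1) t^(-α) e^(-(z+w)/t) S_α(zw/t²)`. In `q(z,ξ,t) q(ξ,w,s)` the dependence on `ξ`
is `ξ^(α-1) e^(-rξ) S_α(uξ) S_α(vξ)` with `r = 1/t + 1/s`, `u = z/t²`, `v = w/s²`. Expanding both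
series turns the `ξ`-integral into a double series of Gamma integrals
`∫ ξ^(α+m+n-1) e^(-rξ) dξ = Γ(α+m+n) r^(-α-m-n)`, and the Chu–Vandermonde identity
`Γ(α+m+n) / (Γ(α+m) Γ(α+n)) = ∑ₖ C(m,k) C(n,k) k! / Γ(α+k)` resums it to
`r^(-α) e^((u+v)/r) S_α(uv/r²)`. Since `1/r = ts/(t+s)`, this is the kernel at time `t + s`.
-/

open Real MeasureTheory

/-- The kernel `q(z,w,t)` from the paper. -/
noncomputable def modelKernel (ν z w t : ℝ) : ℝ :=
  z ^ (1 - ν) / t ^ (2 - ν) * Real.exp (-(z + w) / t) *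
    ∑' n : ℕ, (z * w) ^ n / (t ^ (2 * n) * (n.factorial : ℝ) * Real.Gamma ((n : ℝ) + 2 - ν))

open Finset
open scoped Nat

namespace ModelKernel

theorem Gamma_add_nat_eq_eval_ascPochhammer_mul {β : ℝ} (hβ : 0 < β) (j : ℕ) :
    Gamma (β + j) = (ascPochhammer ℝ j).eval β * Gamma β := by
  induction j with
  | zero => simp
  | succ j ih =>
    rw [Nat.cast_succ, ← add_assoc, Gamma_add_one (by positivity), ih, ascPochhammer_succ_eval]
    ring

theorem Gamma_add_nat_eq_choose_mul {β : ℝ} (hβ : 0 < β) (j : ℕ) :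
    Gamma (β + j) = j ! * Ring.choose (β + j - 1) j * Gamma β := by
  rw [Gamma_add_nat_eq_eval_ascPochhammer_mul hβ, ← Ring.multichoose_eq, ← nsmul_eq_mul,
    Ring.factorial_nsmul_multichoose_eq_ascPochhammer, Polynomial.ascPochhammer_smeval_eq_eval]

theorem Gamma_add_add_div_eq_sum {α : ℝ} (hα : 0 < α) (m n : ℕ) :
    Gamma (α + m + n) / (Gamma (α + m) * Gamma (α + n)) =
      ∑ k ∈ range (n + 1), (m.choose k * n.choose k * k ! : ℝ) / Gamma (α + k) := by
  -- Chu–Vandermonde for the real binomial coefficient `Ring.choose (m + (α + n - 1)) n`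
  have hm :
      Gamma (α + m + n) = n ! * Ring.choose ((m : ℝ) + (α + n - 1)) n * Gamma (α + m) := by
    rw [Gamma_add_nat_eq_choose_mul (by positivity)]; ring_nf
  have hterm : ∀ k ∈ range (n + 1), Ring.choose (α + n - 1) (n - k) =
      Gamma (α + n) / ((n - k) ! * Gamma (α + k)) := by
    intro k hk
    have hkn : k ≤ n := mem_range_succ_iff.mp hk
    have h := Gamma_add_nat_eq_choose_mul (β := α + k) (by positivity) (n - k)
    rw [Nat.cast_sub hkn, show α + k + (n - k : ℝ) = α + n by ring] at h
    rw [h, show α + n - 1 = α + k + (n - k : ℝ) - 1 by ring, ← Nat.cast_sub hkn]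
    field_simp
  rw [hm, Ring.add_choose_eq _ (Commute.all _ _), Finset.Nat.sum_antidiagonal_eq_sum_range_succ_mk,
    Finset.mul_sum, Finset.sum_mul, Finset.sum_div]
  refine sum_congr rfl fun k hk => ?_
  have hkn : k ≤ n := mem_range_succ_iff.mp hk
  rw [hterm k hk, Ring.choose_natCast]
  have hfac : (n.choose k * k ! * (n - k) ! : ℝ) = n ! := by
    exact_mod_cast Nat.choose_mul_factorial_mul_factorial hkn
  rw [← hfac]
  field_simp

/-- `besselSeries α x = x ^ ((1 - α) / 2) * I_{α-1}(2 √x)`, `I` the modified Bessel function. -/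
noncomputable def besselSeries (α x : ℝ) : ℝ := ∑' n : ℕ, x ^ n / (n ! * Gamma (α + n))

theorem summable_besselSeries {α : ℝ} (hα : 0 < α) (x : ℝ) :
    Summable fun n : ℕ => x ^ n / (n ! * Gamma (α + n)) := by
  refine (Real.summable_pow_div_factorial |x|).of_norm_bounded_eventually ?_
  rw [Nat.cofinite_eq_atTop, Filter.eventually_atTop]
  refine ⟨2, fun n hn => ?_⟩
  have hΓ : 1 ≤ Gamma (α + n) := by
    rw [← Gamma_two]
    refine Gamma_strictMonoOn_Ici.monotoneOn (Set.mem_Ici.2 le_rfl) (Set.mem_Ici.2 ?_) ?_ <;>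
      · have : (2 : ℝ) ≤ n := by exact_mod_cast hn
        linarith
  rw [norm_div, norm_pow, Real.norm_eq_abs, norm_mul, Real.norm_of_nonneg (by positivity),
    Real.norm_of_nonneg (by positivity)]
  gcongr
  exact le_mul_of_one_le_right (by positivity) hΓ

theorem besselSeries_nonneg {α x : ℝ} (hα : 0 < α) (hx : 0 ≤ x) : 0 ≤ besselSeries α x :=
  tsum_nonneg fun n => by positivity

theorem hasSum_choose_mul_pow_div_factorial (k : ℕ) (a : ℝ) :
    HasSum (fun m : ℕ => m.choose k * (a ^ m / m !)) (a ^ k / k ! * exp a) := by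
  refine (hasSum_nat_add_iff' k).mp ?_
  have hexp : HasSum (fun m : ℕ => a ^ m / m !) (exp a) := by
    rw [Real.exp_eq_exp_ℝ]; exact NormedSpace.expSeries_div_hasSum_exp a
  rw [sum_eq_zero fun i hi => by simp [Nat.choose_eq_zero_of_lt (mem_range.mp hi)], sub_zero]
  have hshift : (fun m => ((m + k).choose k : ℝ) * (a ^ (m + k) / (m + k) !)) =
      fun m => a ^ k / k ! * (a ^ m / m !) := by
    funext m
    have hC : ((m + k).choose k : ℝ) ≠ 0 := mod_cast (Nat.choose_pos (Nat.le_add_left k m)).ne'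
    rw [← Nat.add_choose_mul_factorial_mul_factorial m k]
    push_cast
    field_simp
    ring
  exact hshift ▸ hexp.mul_left (a ^ k / k !)

theorem hasSum_of_tsum_ofReal_eq {ι : Type*} {f : ι → ℝ} (hf : ∀ i, 0 ≤ f i) {r : ℝ}
    (hr : 0 ≤ r) (h : ∑' i, ENNReal.ofReal (f i) = ENNReal.ofReal r) : HasSum f r := by
  have hs : Summable f := by
    refine (ENNReal.summable_toReal (h ▸ ENNReal.ofReal_ne_top)).congr fun i => ?_
    exact ENNReal.toReal_ofReal (hf i)
  rw [← ENNReal.ofReal_tsum_of_nonneg hf hs,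
    ENNReal.ofReal_eq_ofReal_iff (tsum_nonneg hf) hr] at h
  exact h ▸ hs.hasSum

theorem hasSum_Gamma_div_mul_pow_div_factorial {α a b : ℝ} (hα : 0 < α) (ha : 0 ≤ a)
    (hb : 0 ≤ b) :
    HasSum (fun p : ℕ × ℕ => Gamma (α + p.1 + p.2) / (Gamma (α + p.1) * Gamma (α + p.2)) *
      (a ^ p.1 / p.1 !) * (b ^ p.2 / p.2 !)) (exp (a + b) * besselSeries α (a * b)) := by
  set A : ℕ → ℕ → ℝ := fun k m => m.choose k * (a ^ m / m !)
  set B : ℕ → ℕ → ℝ := fun k n => n.choose k * (b ^ n / n !)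
  set c : ℕ → ℝ := fun k => k ! / Gamma (α + k)
  have hterm : ∀ m n : ℕ,
      ENNReal.ofReal (Gamma (α + m + n) / (Gamma (α + m) * Gamma (α + n)) *
        (a ^ m / m !) * (b ^ n / n !)) =
      ∑' k, ENNReal.ofReal (A k m) * ENNReal.ofReal (B k n) * ENNReal.ofReal (c k) := by
    intro m n
    rw [Gamma_add_add_div_eq_sum hα, sum_mul, sum_mul, ENNReal.ofReal_sum_of_nonneg
      fun k _ => by positivity]
    refine (sum_congr rfl fun k _ => ?_).trans (tsum_eq_sum fun k hk => ?_).symm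
    · rw [← ENNReal.ofReal_mul (by positivity), ← ENNReal.ofReal_mul (by positivity)]
      congr 1
      simp only [A, B, c]
      ring
    · simp [B, Nat.choose_eq_zero_of_lt (not_lt.mp (mt mem_range.mpr hk))]
  have hsum : ∀ k, ∑' m, ∑' n,
      ENNReal.ofReal (A k m) * ENNReal.ofReal (B k n) * ENNReal.ofReal (c k) =
      ENNReal.ofReal (exp (a + b) * ((a * b) ^ k / (k ! * Gamma (α + k)))) := by
    intro k
    simp only [ENNReal.tsum_mul_right, ENNReal.tsum_mul_left]
    rw [← ENNReal.ofReal_tsum_of_nonneg (fun m => by positivity)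
        (hasSum_choose_mul_pow_div_factorial k a).summable,
      ← ENNReal.ofReal_tsum_of_nonneg (fun n => by positivity)
        (hasSum_choose_mul_pow_div_factorial k b).summable,
      (hasSum_choose_mul_pow_div_factorial k a).tsum_eq,
      (hasSum_choose_mul_pow_div_factorial k b).tsum_eq,
      ← ENNReal.ofReal_mul (by positivity), ← ENNReal.ofReal_mul (by positivity)]
    congr 1
    simp only [c]
    rw [exp_add]
    field_simp
    ring
  refine hasSum_of_tsum_ofReal_eq (fun p => by positivity)
    (mul_nonneg (exp_pos _).le (besselSeries_nonneg hα (mul_nonneg ha hb))) ?_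
  rw [ENNReal.tsum_prod', tsum_congr fun m => tsum_congr fun n => hterm m n,
    tsum_congr fun m => ENNReal.tsum_comm, ENNReal.tsum_comm, tsum_congr hsum,
    ← ENNReal.ofReal_tsum_of_nonneg (fun k => by positivity)
      ((summable_besselSeries hα (a * b)).mul_left _), tsum_mul_left, besselSeries]

theorem integral_rpow_mul_exp_neg_mul_besselSeries_mul_besselSeries {α r u v : ℝ} (hα : 0 < α)
    (hr : 0 < r) (hu : 0 ≤ u) (hv : 0 ≤ v) :
    ∫ ξ in Set.Ioi 0,
        ξ ^ (α - 1) * exp (-(r * ξ)) * (besselSeries α (u * ξ) * besselSeries α (v * ξ)) =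
      (1 / r) ^ α * (exp ((u + v) / r) * besselSeries α (u * v / r ^ 2)) := by
  set coeff : ℕ × ℕ → ℝ := fun p =>
    u ^ p.1 / (p.1 ! * Gamma (α + p.1)) * (v ^ p.2 / (p.2 ! * Gamma (α + p.2)))
  set F : ℕ × ℕ → ℝ → ℝ := fun p ξ =>
    coeff p * (ξ ^ (α + p.1 + p.2 - 1) * exp (-(r * ξ)))
  have hexpand : ∀ ξ ∈ Set.Ioi (0 : ℝ),
      ξ ^ (α - 1) * exp (-(r * ξ)) * (besselSeries α (u * ξ) * besselSeries α (v * ξ)) =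
        ∑' p, F p ξ := by
    intro ξ hξ
    have hnorm : ∀ x, Summable fun n : ℕ => ‖x ^ n / (n ! * Gamma (α + n))‖ := fun x => by
      simpa only [Real.norm_eq_abs] using (summable_besselSeries hα x).abs
    rw [besselSeries, besselSeries, tsum_mul_tsum_of_summable_norm (hnorm _) (hnorm _),
      ← tsum_mul_left]
    refine tsum_congr fun p => ?_
    simp only [F, coeff]
    rw [show α + p.1 + p.2 - 1 = α - 1 + p.1 + p.2 by ring, rpow_add hξ, rpow_add hξ,
      rpow_natCast, rpow_natCast, mul_pow, mul_pow]
    ring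
  have hintegral : ∀ p, ∫ ξ in Set.Ioi 0, F p ξ =
      coeff p * ((1 / r) ^ (α + p.1 + p.2) * Gamma (α + p.1 + p.2)) := fun p => by
    rw [integral_const_mul, integral_rpow_mul_exp_neg_mul_Ioi (by positivity) hr]
  have hintegrable : ∀ p, Integrable (F p) (volume.restrict (Set.Ioi 0)) := fun p =>
    (Integrable.of_integral_ne_zero (by
      rw [integral_rpow_mul_exp_neg_mul_Ioi (by positivity) hr]; positivity)).const_mul _
  have hsum : HasSum (fun p => ∫ ξ in Set.Ioi 0, F p ξ)
      ((1 / r) ^ α * (exp ((u + v) / r) * besselSeries α (u * v / r ^ 2))) := by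
    have h := (hasSum_Gamma_div_mul_pow_div_factorial hα (div_nonneg hu hr.le)
      (div_nonneg hv hr.le)).mul_left ((1 / r) ^ α)
    rw [← add_div, div_mul_div_comm, ← sq] at h
    refine h.congr_fun fun p => ?_
    rw [hintegral, rpow_add (by positivity), rpow_add (by positivity), rpow_natCast, rpow_natCast]
    simp only [coeff]
    field_simp
    ring
  have hnorm : Summable fun p => ∫ ξ in Set.Ioi 0, ‖F p ξ‖ := by
    refine hsum.summable.congr fun p => setIntegral_congr_fun measurableSet_Ioi fun ξ hξ => ?_
    have hξ' : 0 < ξ := hξ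
    exact (Real.norm_of_nonneg (by positivity)).symm
  rw [setIntegral_congr_fun measurableSet_Ioi hexpand]
  exact (hasSum_integral_of_summable_integral_norm hintegrable hnorm).unique hsum

theorem modelKernel_eq (ν z w t : ℝ) :
    modelKernel ν z w t =
      z ^ (1 - ν) / t ^ (2 - ν) * exp (-(z + w) / t) * besselSeries (2 - ν) (z * w / t ^ 2) := by
  rw [modelKernel, besselSeries]
  congr 1
  refine tsum_congr fun n => ?_
  rw [div_pow, ← pow_mul, show (n : ℝ) + 2 - ν = 2 - ν + n by ring]
  field_simp

theorem modelKernel_mul_modelKernel (ν z ξ w t s : ℝ) :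
    modelKernel ν z ξ t * modelKernel ν ξ w s =
      z ^ (1 - ν) / (t ^ (2 - ν) * s ^ (2 - ν)) * exp (-(z / t) - w / s) *
        (ξ ^ (2 - ν - 1) * exp (-((1 / t + 1 / s) * ξ)) *
          (besselSeries (2 - ν) (z / t ^ 2 * ξ) * besselSeries (2 - ν) (w / s ^ 2 * ξ))) := by
  have hexp : exp (-(z + ξ) / t) * exp (-(ξ + w) / s) =
      exp (-(z / t) - w / s) * exp (-((1 / t + 1 / s) * ξ)) := by
    rw [← exp_add, ← exp_add]; congr 1; ring
  rw [modelKernel_eq, modelKernel_eq, show 2 - ν - 1 = 1 - ν by ring,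
    show z * ξ / t ^ 2 = z / t ^ 2 * ξ by ring, show ξ * w / s ^ 2 = w / s ^ 2 * ξ by ring]
  linear_combination (z ^ (1 - ν) / (t ^ (2 - ν) * s ^ (2 - ν)) * ξ ^ (1 - ν) *
    besselSeries (2 - ν) (z / t ^ 2 * ξ) * besselSeries (2 - ν) (w / s ^ 2 * ξ)) * hexp

end ModelKernel

open ModelKernel in
/-- Chapman–Kolmogorov equation for `q`. -/
theorem stmt_2 (ν : ℝ) (hν : ν < 1) (z w t s : ℝ) (hz : 0 < z) (hw : 0 < w)
    (ht : 0 < t) (hs : 0 < s) :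
    modelKernel ν z w (t + s)
      = ∫ ξ in Set.Ioi (0 : ℝ), modelKernel ν z ξ t * modelKernel ν ξ w s := by
  have hrinv : 1 / (1 / t + 1 / s) = t * s / (t + s) := by field_simp; ring
  simp_rw [modelKernel_mul_modelKernel]
  rw [integral_const_mul, integral_rpow_mul_exp_neg_mul_besselSeries_mul_besselSeries
    (by linarith) (by positivity) (by positivity) (by positivity), modelKernel_eq]
  have hexp : exp (-(z / t) - w / s) * exp ((z / t ^ 2 + w / s ^ 2) / (1 / t + 1 / s)) =
      exp (-(z + w) / (t + s)) := by
    rw [← exp_add, div_eq_mul_one_div _ (1 / t + 1 / s), hrinv]; congr 1; field_simp; ring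
  have harg : z / t ^ 2 * (w / s ^ 2) / (1 / t + 1 / s) ^ 2 = z * w / (t + s) ^ 2 := by
    rw [div_eq_mul_one_div _ (_ ^ 2), ← one_div_pow, hrinv]; field_simp
  have hpow :
      (1 / (1 / t + 1 / s)) ^ (2 - ν) = t ^ (2 - ν) * s ^ (2 - ν) / (t + s) ^ (2 - ν) := by
    rw [hrinv, div_rpow (by positivity) (by positivity), mul_rpow ht.le hs.le]
  rw [harg, hpow, ← hexp]
  field_simp
end

section
/- Fix 0 < 𝔟 ≤ 1, V ≥ 0, 𝔠 ≥ 1, and set m_n(t) := Γ(𝔟)^{n+1} (𝔠 t^𝔟 V)^n / Γ((n+1)𝔟) and M(t) := ∑_{n=0}^∞ m_n(t). Then for every k ≥ 1 and t > 0, the tail satisfies ∑_{n=k}^∞ m_n(t) ≤ m_k(t) M(t). -/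
/-!
Log-convexity of `Γ` gives `Γ((k+1)𝔟) Γ((n+1)𝔟) ≤ Γ(𝔟) Γ((n+k+1)𝔟)` (in Beta-function form,
`B((n+1)𝔟, k𝔟) ≤ B(𝔟, k𝔟)`), which is exactly the termwise bound `m_{n+k}(t) ≤ m_k(t) m_n(t)`;
summing over `n` gives the tail estimate.
-/

open Real

/-- The sequence `m_n(t) = Γ(𝔟)^{n+1} (𝔠 t^𝔟 V)^n / Γ((n+1)𝔟)`. -/
noncomputable def mSeq (𝔟 V 𝔠 : ℝ) (n : ℕ) (t : ℝ) : ℝ :=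
  Real.Gamma 𝔟 ^ (n + 1) * (𝔠 * t ^ 𝔟 * V) ^ n / Real.Gamma (((n : ℝ) + 1) * 𝔟)

/-- `a + u` and `a + v` are the convex combinations of `a` and `a + u + v` with weights
`(v, u) / (u + v)` and `(u, v) / (u + v)`. -/
theorem ConvexOn.map_add_add_map_add_le {𝕜 : Type*} [Field 𝕜] [LinearOrder 𝕜]
    [IsStrictOrderedRing 𝕜] {s : Set 𝕜} {f : 𝕜 → 𝕜} (hf : ConvexOn 𝕜 s f) {a u v : 𝕜}
    (ha : a ∈ s) (hauv : a + u + v ∈ s) (hu : 0 ≤ u) (hv : 0 ≤ v) :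
    f (a + u) + f (a + v) ≤ f a + f (a + u + v) := by
  rcases (add_nonneg hu hv).eq_or_lt with huv | huv
  · obtain ⟨rfl, rfl⟩ : u = 0 ∧ v = 0 := ⟨by linarith, by linarith⟩
    simp
  have hw : v / (u + v) + u / (u + v) = 1 := by field_simp; ring
  have hu_comb := hf.2 ha hauv (div_nonneg hv huv.le) (div_nonneg hu huv.le) hw
  have hv_comb := hf.2 ha hauv (div_nonneg hu huv.le) (div_nonneg hv huv.le) (by linarith)
  have hu_eq : (v / (u + v)) • a + (u / (u + v)) • (a + u + v) = a + u := by
    simp only [smul_eq_mul]; field_simp; ring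
  have hv_eq : (u / (u + v)) • a + (v / (u + v)) • (a + u + v) = a + v := by
    simp only [smul_eq_mul]; field_simp; ring
  rw [hu_eq] at hu_comb
  rw [hv_eq] at hv_comb
  simp only [smul_eq_mul] at hu_comb hv_comb
  linear_combination hu_comb + hv_comb + (f a + f (a + u + v)) * hw

theorem Real.Gamma_add_mul_Gamma_add_le {a u v : ℝ} (ha : 0 < a) (hu : 0 ≤ u) (hv : 0 ≤ v) :
    Gamma (a + u) * Gamma (a + v) ≤ Gamma a * Gamma (a + u + v) := by
  have hlog := convexOn_log_Gamma.map_add_add_map_add_le (Set.mem_Ioi.2 ha)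
    (Set.mem_Ioi.2 (by linarith : 0 < a + u + v)) hu hv
  have hΓa := Gamma_pos_of_pos ha
  have hΓu := Gamma_pos_of_pos (by linarith : 0 < a + u)
  have hΓv := Gamma_pos_of_pos (by linarith : 0 < a + v)
  have hΓuv := Gamma_pos_of_pos (by linarith : 0 < a + u + v)
  rw [← log_le_log_iff (by positivity) (by positivity), log_mul hΓu.ne' hΓv.ne',
    log_mul hΓa.ne' hΓuv.ne']
  exact hlog

theorem mSeq_add_le_mul {𝔟 V 𝔠 t : ℝ} (h𝔟 : 0 < 𝔟) (hx : 0 ≤ 𝔠 * t ^ 𝔟 * V) (k n : ℕ) :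
    mSeq 𝔟 V 𝔠 (n + k) t ≤ mSeq 𝔟 V 𝔠 k t * mSeq 𝔟 V 𝔠 n t := by
  have hΓ : 0 < Gamma 𝔟 := Gamma_pos_of_pos h𝔟
  have hΓ_mul : Gamma (((k : ℝ) + 1) * 𝔟) * Gamma (((n : ℝ) + 1) * 𝔟)
      ≤ Gamma 𝔟 * Gamma ((((n + k : ℕ) : ℝ) + 1) * 𝔟) := by
    convert Gamma_add_mul_Gamma_add_le h𝔟 (by positivity : 0 ≤ (k : ℝ) * 𝔟)
      (by positivity : 0 ≤ (n : ℝ) * 𝔟) using 2 <;> push_cast <;> ring_nf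
  calc mSeq 𝔟 V 𝔠 (n + k) t
      = Gamma 𝔟 ^ (n + k + 2) * (𝔠 * t ^ 𝔟 * V) ^ (n + k)
          / (Gamma 𝔟 * Gamma ((((n + k : ℕ) : ℝ) + 1) * 𝔟)) := by
        rw [mSeq, ← mul_div_mul_left _ _ hΓ.ne']; ring
    _ ≤ Gamma 𝔟 ^ (n + k + 2) * (𝔠 * t ^ 𝔟 * V) ^ (n + k)
          / (Gamma (((k : ℝ) + 1) * 𝔟) * Gamma (((n : ℝ) + 1) * 𝔟)) :=
        div_le_div_of_nonneg_left (by positivity)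
          (mul_pos (Gamma_pos_of_pos (by positivity)) (Gamma_pos_of_pos (by positivity))) hΓ_mul
    _ = mSeq 𝔟 V 𝔠 k t * mSeq 𝔟 V 𝔠 n t := by
        rw [mSeq, mSeq, div_mul_div_comm]; ring

theorem stmt_6_general (𝔟 V 𝔠 : ℝ) (h𝔟0 : 0 < 𝔟) (hV : 0 ≤ V) (h𝔠 : 1 ≤ 𝔠)
    (k : ℕ) (t : ℝ) (ht : 0 < t) :
    (∑' n : ℕ, mSeq 𝔟 V 𝔠 (n + k) t)
      ≤ mSeq 𝔟 V 𝔠 k t * ∑' n : ℕ, mSeq 𝔟 V 𝔠 n t := by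
  have hx : 0 ≤ 𝔠 * t ^ 𝔟 * V := by
    have := rpow_nonneg ht.le 𝔟
    have : (0 : ℝ) ≤ 𝔠 := by linarith
    positivity
  by_cases hs : Summable (fun n : ℕ => mSeq 𝔟 V 𝔠 n t)
  · rw [← tsum_mul_left]
    exact ((summable_nat_add_iff k).2 hs).tsum_le_tsum (mSeq_add_le_mul h𝔟0 hx k)
      (hs.mul_left _)
  · rw [tsum_eq_zero_of_not_summable (mt (summable_nat_add_iff k).1 hs),
      tsum_eq_zero_of_not_summable hs, mul_zero]

/-- The tail of the series `M(t) = ∑ m_n(t)` satisfies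
`∑_{n=k}^∞ m_n(t) ≤ m_k(t) M(t)` for every `k ≥ 1`. -/
theorem stmt_6 (𝔟 V 𝔠 : ℝ) (h𝔟0 : 0 < 𝔟) (h𝔟1 : 𝔟 ≤ 1) (hV : 0 ≤ V) (h𝔠 : 1 ≤ 𝔠)
    (k : ℕ) (hk : 1 ≤ k) (t : ℝ) (ht : 0 < t) :
    (∑' n : ℕ, mSeq 𝔟 V 𝔠 (n + k) t)
      ≤ mSeq 𝔟 V 𝔠 k t * ∑' n : ℕ, mSeq 𝔟 V 𝔠 n t :=
  stmt_6_general 𝔟 V 𝔠 h𝔟0 hV h𝔠 k t ht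
end

section
/- Let α ∈ (0,2), a ∈ C([0,∞)) with a > 0 and a(0) = 1, and b ∈ C([0,∞)), with b(0) ∈ [0,1) when α ≤ 1 and b(0) = 0 when α > 1. Define φ(x) := (1/4)(∫_0^x ds/(s^{α/2}√a(s)))² and θ(x) := 1/2 - ν + [(2b(x) - (x^α a(x))')/(2 x^{α/2}√a(x))]·√φ(x). Then the constant ν with lim_{x↓0} θ(x) = 0 equals ν = (1-α)/(2-α) if α ≠ 1, and ν = b(0) if α = 1; in all cases ν < 1. -/
open Real Filter Topology Set MeasureTheory

/-!
Write `F x = ∫₀ˣ s^{-α/2} a(s)^{-1/2} ds`, so that `√φ = F / 2`. Multiplying numerator and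
denominator by `x^{1-α/2}` turns `θ x` into
`1/2 - ν + (2 b x · x^{1-α} - α a x - x a' x) · (F x / x^{1-α/2}) / (4 √(a x))`.
By l'Hôpital `F x / x^{1-α/2} → 2/(2-α)`, boundedness of `a'` gives `x a' x → 0`, and
`b x · x^{1-α}` tends to `B₀ := if α = 1 then b 0 else 0` (for `α > 1` because `b 0 = 0`
and `b` is Lipschitz near `0`). Hence `θ` tends to `1/2 - ν + (2 B₀ - α) / (2 (2 - α))`, and
`θ → 0` forces `ν = (1 - α + B₀) / (2 - α)`.
-/

lemma tendsto_rpow_nhdsGT_zero {p : ℝ} (hp : 0 < p) :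
    Tendsto (fun x : ℝ => x ^ p) (𝓝[>] 0) (𝓝 0) := by
  have h := (continuousAt_rpow_const 0 p (Or.inr hp.le)).tendsto
  rw [zero_rpow hp.ne'] at h
  exact h.mono_left nhdsWithin_le_nhds

lemma ContinuousOn.tendsto_nhdsGT {f : ℝ → ℝ} {c : ℝ} (hf : ContinuousOn f (Ici c)) :
    Tendsto f (𝓝[>] c) (𝓝 (f c)) :=
  (hf c self_mem_Ici).tendsto.mono_left (nhdsWithin_mono c Ioi_subset_Ici_self)

lemma tendsto_mul_nhdsGT_zero_of_abs_le {h : ℝ → ℝ} {C : ℝ}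
    (hC : ∀ x ∈ Ioc (0 : ℝ) 1, |h x| ≤ C) :
    Tendsto (fun x => x * h x) (𝓝[>] 0) (𝓝 0) := by
  refine (tendsto_nhdsWithin_of_tendsto_nhds tendsto_id).zero_mul_isBoundedUnder_le ?_
  refine isBoundedUnder_of_eventually_le (a := C) ?_
  filter_upwards [Ioc_mem_nhdsGT zero_lt_one] with x hx using hC x hx

lemma abs_le_mul_of_abs_deriv_le {b : ℝ → ℝ} {C x : ℝ} (hx : 0 < x)
    (hb : ContinuousOn b (Icc 0 x)) (hb0 : b 0 = 0)
    (hdiff : ∀ y ∈ Ioo 0 x, DifferentiableAt ℝ b y) (hC : ∀ y ∈ Ioo 0 x, |deriv b y| ≤ C) :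
    |b x| ≤ C * x := by
  obtain ⟨c, hc, hslope⟩ :=
    exists_hasDerivAt_eq_slope b (deriv b) hx hb fun y hy => (hdiff y hy).hasDerivAt
  rw [hb0, sub_zero, sub_zero, eq_div_iff hx.ne'] at hslope
  rw [← hslope, abs_mul, abs_of_pos hx]
  exact mul_le_mul_of_nonneg_right (hC c hc) hx.le

lemma tendsto_mul_rpow_one_sub {α C : ℝ} (hα : α < 2) {b : ℝ → ℝ}
    (hb : ContinuousOn b (Ici 0)) (hb0 : 1 < α → b 0 = 0)
    (hdiff : ∀ x ∈ Ioi (0 : ℝ), DifferentiableAt ℝ b x)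
    (hC : ∀ x ∈ Ioc (0 : ℝ) 1, |deriv b x| ≤ C) :
    Tendsto (fun x => b x * x ^ (1 - α)) (𝓝[>] 0) (𝓝 (if α = 1 then b 0 else 0)) := by
  rcases lt_trichotomy α 1 with hlt | rfl | hgt
  · rw [if_neg hlt.ne]
    simpa using hb.tendsto_nhdsGT.mul (tendsto_rpow_nhdsGT_zero (sub_pos.mpr hlt))
  · simpa using hb.tendsto_nhdsGT
  · rw [if_neg hgt.ne']
    have hlim : Tendsto (fun x : ℝ => C * x ^ (2 - α)) (𝓝[>] 0) (𝓝 0) := by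
      simpa using (tendsto_rpow_nhdsGT_zero (by linarith : 0 < 2 - α)).const_mul C
    refine squeeze_zero_norm' ?_ hlim
    filter_upwards [Ioo_mem_nhdsGT zero_lt_one] with x hx
    have hbx : |b x| ≤ C * x :=
      abs_le_mul_of_abs_deriv_le hx.1 (hb.mono fun s hs => hs.1) (hb0 hgt)
        (fun y hy => hdiff y hy.1) fun y hy => hC y ⟨hy.1, (hy.2.trans hx.2).le⟩
    calc ‖b x * x ^ (1 - α)‖ = |b x| * x ^ (1 - α) := by
          rw [norm_mul, norm_of_nonneg (rpow_nonneg hx.1.le _), Real.norm_eq_abs]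
      _ ≤ C * x * x ^ (1 - α) := mul_le_mul_of_nonneg_right hbx (rpow_nonneg hx.1.le _)
      _ = C * x ^ (2 - α) := by
          rw [mul_assoc, ← rpow_one_add' hx.1.le (by linarith)]
          ring_nf

section WeightedPrimitive

variable {β : ℝ} {g : ℝ → ℝ}

lemma intervalIntegrable_inv_rpow_mul (hβ : β < 1) {x : ℝ} (hx : 0 < x)
    (hg : ContinuousOn g (Icc 0 x)) (hg_pos : ∀ s ∈ Icc 0 x, 0 < g s) :
    IntervalIntegrable (fun s => (s ^ β * g s)⁻¹) volume 0 x := by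
  obtain ⟨s₀, hs₀, hmin⟩ := isCompact_Icc.exists_isMinOn (nonempty_Icc.mpr hx.le) hg
  have hm := hg_pos s₀ hs₀
  rw [intervalIntegrable_iff_integrableOn_Ioc_of_le hx.le]
  have hdom : IntegrableOn (fun s : ℝ => (g s₀)⁻¹ * s ^ (-β)) (Ioc 0 x) := by
    rw [← intervalIntegrable_iff_integrableOn_Ioc_of_le hx.le]
    exact (intervalIntegral.intervalIntegrable_rpow' (by linarith)).const_mul _
  have hcont : ContinuousOn (fun s => (s ^ β * g s)⁻¹) (Ioc 0 x) :=
    ((continuousOn_id.rpow_const fun s hs => Or.inl hs.1.ne').mul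
      (hg.mono Ioc_subset_Icc_self)).inv₀ fun s hs =>
        (mul_pos (rpow_pos_of_pos hs.1 β) (hg_pos s (Ioc_subset_Icc_self hs))).ne'
  refine hdom.mono' (hcont.aestronglyMeasurable measurableSet_Ioc)
    (ae_restrict_of_forall_mem measurableSet_Ioc fun s hs => ?_)
  have hgs := hg_pos s (Ioc_subset_Icc_self hs)
  rw [norm_inv, Real.norm_eq_abs, abs_of_pos (mul_pos (rpow_pos_of_pos hs.1 β) hgs),
    rpow_neg hs.1.le, ← mul_inv, mul_comm]
  exact inv_anti₀ (mul_pos hm (rpow_pos_of_pos hs.1 β))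
    (mul_le_mul_of_nonneg_right (hmin (Ioc_subset_Icc_self hs)) (rpow_nonneg hs.1.le β))

theorem tendsto_integral_inv_rpow_mul_div_rpow (hβ : β < 1)
    (hg : ContinuousOn g (Ici 0)) (hg_pos : ∀ s ∈ Ici (0 : ℝ), 0 < g s) :
    Tendsto (fun x => (∫ s in (0 : ℝ)..x, (s ^ β * g s)⁻¹) / x ^ (1 - β)) (𝓝[>] 0)
      (𝓝 ((1 - β) * g 0)⁻¹) := by
  set f : ℝ → ℝ := fun s => (s ^ β * g s)⁻¹
  have hint : ∀ x > 0, IntervalIntegrable f volume 0 x := fun x hx =>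
    intervalIntegrable_inv_rpow_mul hβ hx (hg.mono Icc_subset_Ici_self) fun s hs => hg_pos s hs.1
  have hf_cont : ∀ x ∈ Ioi (0 : ℝ), ContinuousAt f x := fun x hx =>
    ((continuousAt_rpow_const x β (Or.inl (ne_of_gt hx))).mul
      (hg.continuousAt (Ici_mem_nhds hx))).inv₀
      (mul_pos (rpow_pos_of_pos hx β) (hg_pos x (mem_Ici.mpr (le_of_lt hx)))).ne'
  have hF0 : Tendsto (fun x => ∫ s in (0 : ℝ)..x, f s) (𝓝[>] 0) (𝓝 0) := by
    have h := intervalIntegral.continuousOn_primitive_interval' (hint 1 one_pos) left_mem_uIcc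
      0 left_mem_uIcc
    rw [uIcc_of_le zero_le_one] at h
    simpa using (h.mono_of_mem_nhdsWithin (Icc_mem_nhdsGT zero_lt_one)).tendsto
  have hquot : Tendsto (fun x => f x / ((1 - β) * x ^ (1 - β - 1))) (𝓝[>] 0)
      (𝓝 ((1 - β) * g 0)⁻¹) := by
    refine ((tendsto_const_nhds.mul hg.tendsto_nhdsGT).inv₀
      (mul_pos (by linarith) (hg_pos 0 self_mem_Ici)).ne').congr' ?_
    filter_upwards [self_mem_nhdsWithin] with x (hx : 0 < x)
    have hxβ := rpow_pos_of_pos hx β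
    have hgx := hg_pos x hx.le
    have hβ' : 1 - β ≠ 0 := by linarith
    rw [sub_sub_cancel_left, rpow_neg hx.le]
    simp only [f]
    field_simp
  exact HasDerivAt.lhopital_zero_right_on_Ioo one_pos
    (fun x hx => intervalIntegral.integral_hasDerivAt_right (hint x hx.1)
      (ContinuousAt.stronglyMeasurableAtFilter isOpen_Ioi hf_cont x hx.1) (hf_cont x hx.1))
    (fun x hx => hasDerivAt_rpow_const (Or.inl hx.1.ne'))
    (fun x hx => (mul_pos (by linarith) (rpow_pos_of_pos hx.1 _)).ne')
    hF0 (tendsto_rpow_nhdsGT_zero (by linarith)) hquot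

end WeightedPrimitive

lemma deriv_rpow_mul {α x : ℝ} (hx : 0 < x) {a : ℝ → ℝ} (ha : DifferentiableAt ℝ a x) :
    deriv (fun y : ℝ => y ^ α * a y) x = α * x ^ (α - 1) * a x + x ^ α * deriv a x :=
  ((hasDerivAt_rpow_const (Or.inl hx.ne')).mul ha.hasDerivAt).deriv

lemma drift_mul_div_eq_rescaled {α x : ℝ} (hx : 0 < x) (A A' B F S : ℝ) (hS : S ≠ 0) :
    (2 * B - (α * x ^ (α - 1) * A + x ^ α * A')) / (2 * x ^ (α / 2) * S) * (F / 2) =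
      (2 * (B * x ^ (1 - α)) - α * A - x * A') * (F / x ^ (1 - α / 2)) / (4 * S) := by
  have hx2 : x ^ (α / 2) ≠ 0 := (rpow_pos_of_pos hx _).ne'
  have e1 : x ^ α = x ^ (α / 2) * x ^ (α / 2) := by rw [← rpow_add hx]; ring_nf
  rw [rpow_sub hx, rpow_sub hx, rpow_sub hx, rpow_one, e1]
  field_simp
  ring

/-- Identification of the constant `ν` for which `lim_{x↓0} θ(x) = 0`:
`ν = (1-α)/(2-α)` when `α ≠ 1` and `ν = b(0)` when `α = 1`; in all cases `ν < 1`. -/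
theorem stmt_13 (α : ℝ) (hα : α ∈ Set.Ioo (0 : ℝ) 2)
    (a b : ℝ → ℝ)
    (ha_cont : ContinuousOn a (Set.Ici 0))
    (ha_pos : ∀ x ∈ Set.Ici (0 : ℝ), 0 < a x)
    (ha0 : a 0 = 1)
    (hb_cont : ContinuousOn b (Set.Ici 0))
    (hb0_le : α ≤ 1 → b 0 ∈ Set.Ico (0 : ℝ) 1)
    (hb0_gt : 1 < α → b 0 = 0)
    (ha_C2 : ∀ x ∈ Set.Ioi (0 : ℝ), ContDiffAt ℝ 2 a x)
    (hb_C1 : ∀ x ∈ Set.Ioi (0 : ℝ), ContDiffAt ℝ 1 b x)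
    (hbdd : ∀ I > (0 : ℝ), ∃ C : ℝ, ∀ x ∈ Set.Ioc (0 : ℝ) I,
      |a x| ≤ C ∧ |deriv a x| ≤ C ∧ |deriv (deriv a) x| ≤ C ∧ |b x| ≤ C ∧ |deriv b x| ≤ C)
    (φ θ : ℝ → ℝ) (ν : ℝ)
    (hφ : ∀ x > (0 : ℝ),
      φ x = (1 / 4) * (∫ s in (0 : ℝ)..x, (s ^ (α / 2) * Real.sqrt (a s))⁻¹) ^ 2)
    (hθ : ∀ x > (0 : ℝ),
      θ x = 1 / 2 - ν +
        (2 * b x - deriv (fun y : ℝ => y ^ α * a y) x) / (2 * x ^ (α / 2) * Real.sqrt (a x)) *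
          Real.sqrt (φ x))
    (hlim : Filter.Tendsto θ (nhdsWithin 0 (Set.Ioi 0)) (nhds 0)) :
    ν = (if α = 1 then b 0 else (1 - α) / (2 - α)) ∧ ν < 1 := by
  have hα2 := hα.2
  obtain ⟨C, hC⟩ := hbdd 1 one_pos
  set B₀ := if α = 1 then b 0 else 0
  have hsqrt_a : ContinuousOn (fun s => √(a s)) (Ici 0) := ha_cont.sqrt
  have hsqrt_pos : ∀ s ∈ Ici (0 : ℝ), 0 < √(a s) := fun s hs => sqrt_pos.mpr (ha_pos s hs)
  have hF := tendsto_integral_inv_rpow_mul_div_rpow (by linarith : α / 2 < 1) hsqrt_a hsqrt_pos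
  have hB := tendsto_mul_rpow_one_sub hα2 hb_cont hb0_gt
    (fun x hx => (hb_C1 x hx).differentiableAt one_ne_zero) fun x hx => (hC x hx).2.2.2.2
  have hxa' := tendsto_mul_nhdsGT_zero_of_abs_le fun x hx => (hC x hx).2.1
  have hθ_lim : Tendsto θ (𝓝[>] 0) (𝓝 (1 / 2 - ν +
      (2 * B₀ - α * a 0 - 0) * ((1 - α / 2) * √(a 0))⁻¹ / (4 * √(a 0)))) := by
    refine (tendsto_const_nhds.add ((((hB.const_mul 2).sub
      (ha_cont.tendsto_nhdsGT.const_mul α)).sub hxa').mul hF |>.div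
      (hsqrt_a.tendsto_nhdsGT.const_mul 4)
      (mul_pos four_pos (hsqrt_pos 0 self_mem_Ici)).ne')).congr' ?_
    filter_upwards [self_mem_nhdsWithin] with x (hx : 0 < x)
    have hF_nonneg : 0 ≤ ∫ s in (0 : ℝ)..x, (s ^ (α / 2) * √(a s))⁻¹ :=
      intervalIntegral.integral_nonneg hx.le fun s hs =>
        inv_nonneg.mpr (mul_nonneg (rpow_nonneg hs.1 _) (sqrt_nonneg _))
    rw [hθ x hx, hφ x hx, deriv_rpow_mul hx ((ha_C2 x hx).differentiableAt (by norm_num)),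
      show (1 / 4 : ℝ) = (1 / 2) ^ 2 by norm_num, ← mul_pow, sqrt_sq (by positivity),
      one_div_mul_eq_div, drift_mul_div_eq_rescaled hx _ _ _ _ _ (hsqrt_pos x hx.le).ne']
    rfl
  have hν : ν = (1 - α + B₀) / (2 - α) := by
    have hkey := tendsto_nhds_unique hlim hθ_lim
    rw [ha0, sqrt_one] at hkey
    rw [eq_div_iff (by linarith)]
    field_simp at hkey
    linarith
  rcases eq_or_ne α 1 with rfl | hα1
  · simp only [B₀, if_true] at hν ⊢
    norm_num at hν
    exact ⟨hν, hν ▸ (hb0_le le_rfl).2⟩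
  · simp only [B₀, if_neg hα1, add_zero] at hν ⊢
    exact ⟨hν, by rw [hν, div_lt_one (by linarith)]; linarith⟩
end
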